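/- Let A, B be subspaces of E with A ⊕ B = E and let o be an E-orbit contained in X_A. Then the dimension of the ℂ-vector space [[oB]] equals the total number of E-orbits in X, i.e. dim [[oB]] = ∑_{C ⊆ E} |X̄_C|. -/
import Mathlib


open scoped Classical

set_option linter.unusedSectionVars false

noncomputable section

namespace Lusztig

variable (E X : Type) [AddCommGroup E] [Module (ZMod 2) E] [Fintype E]
  [Fintype X] [AddAction E X]

/-- The stabilizer of `x` in `E`, as a subset of `E`. -/
def stabSet (x : X) : Set E := {e : E | e +ᵥ x = x}

/-- `X_A`: the set of points of `X` whose stabilizer in `E` equals `A`. -/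
def XA (A : Submodule (ZMod 2) E) : Set X := {x : X | stabSet E X x = (A : Set E)}

/-- `X²_{AB} = X_A × X_B`. -/
def X2 (A B : Submodule (ZMod 2) E) : Set (X × X) := (XA E X A) ×ˢ (XA E X B)

/-- The `E`-orbit of `x` in `X`. -/
def orb (x : X) : Set X := {y : X | ∃ e : E, y = e +ᵥ x}

/-- The `E`-orbit of `(x,y)` for the diagonal action of `E` on `X × X`. -/
def orb2 (x y : X) : Set (X × X) := {q : X × X | ∃ e : E, q = (e +ᵥ x, e +ᵥ y)}

/-- `O` is an `E`-orbit (for the diagonal action) contained in `X²_{AB}`. -/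
def IsOrb2 (A B : Submodule (ZMod 2) E) (O : Set (X × X)) : Prop :=
  ∃ x y : X, x ∈ XA E X A ∧ y ∈ XA E X B ∧ O = orb2 E X x y

/-- The `E × B`-orbit of `(x,y)` for the action `(e,b)·(x,y) = (e+b+x, e+y)`. -/
def orbEB (B : Submodule (ZMod 2) E) (x y : X) : Set (X × X) :=
  {q : X × X | ∃ e b : E, b ∈ B ∧ q = ((e + b) +ᵥ x, e +ᵥ y)}

/-- `M` is an `E × B`-orbit contained in `X²_{AC}` for the action
`(e,b)·(x,y) = (e+b+x, e+y)`. -/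
def IsOrbEB (A B C : Submodule (ZMod 2) E) (M : Set (X × X)) : Prop :=
  ∃ x y : X, x ∈ XA E X A ∧ y ∈ XA E X C ∧ M = orbEB E X B x y

/-- Image under the first projection. -/
def p1 (S : Set (X × X)) : Set X := Prod.fst '' S

/-- Image under the second projection. -/
def p2 (S : Set (X × X)) : Set X := Prod.snd '' S

/-- `U_{ABC} = {(a,b,c) ∈ A × B × C : a + b + c = 0}`. -/
def UABC (A B C : Submodule (ZMod 2) E) : Set (E × E × E) :=
  {t : E × E × E | t.1 ∈ A ∧ t.2.1 ∈ B ∧ t.2.2 ∈ C ∧ t.1 + t.2.1 + t.2.2 = 0}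

/-- `X̄_C`: the set of `E`-orbits contained in `X_C`. -/
def barX (C : Submodule (ZMod 2) E) : Set (Set X) :=
  {s : Set X | ∃ x ∈ XA E X C, s = orb E X x}

/-- The dual (space of linear forms `P → ℤ/2`) of a subspace `P` of `E`. -/
abbrev Dl (P : Submodule (ZMod 2) E) : Type := ↥P →ₗ[ZMod 2] ZMod 2

/-- Restriction of a linear form along an inclusion of subspaces. -/
def res {P Q : Submodule (ZMod 2) E} (h : P ≤ Q) (φ : Dl E Q) : Dl E P :=
  φ.comp (Submodule.inclusion h)

theorem leAB (A B C : Submodule (ZMod 2) E) : A ⊓ B ⊓ C ≤ A ⊓ B := inf_le_left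
theorem leBC (A B C : Submodule (ZMod 2) E) : A ⊓ B ⊓ C ≤ B ⊓ C :=
  le_inf (inf_le_left.trans inf_le_right) inf_le_right
theorem leAC (A B C : Submodule (ZMod 2) E) : A ⊓ B ⊓ C ≤ A ⊓ C :=
  le_inf (inf_le_left.trans inf_le_left) inf_le_right
theorem leBA (A B : Submodule (ZMod 2) E) : A ⊓ B ≤ B ⊓ A := le_inf inf_le_right inf_le_left

/-- The convolution product `𝓕_{AB} × 𝓕_{BC} → 𝓕_{AC}`. -/
def conv (A B C : Submodule (ZMod 2) E)
    (f₁ : (X × X) × Dl E (A ⊓ B) → ℂ) (f₂ : (X × X) × Dl E (B ⊓ C) → ℂ) :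
    (X × X) × Dl E (A ⊓ C) → ℂ :=
  fun p =>
    (∑ᶠ (y : X) (_ : y ∈ XA E X B) (ε₁ : Dl E (A ⊓ B)) (ε₂ : Dl E (B ⊓ C))
        (_ : res E (leAB E A B C) ε₁ + res E (leBC E A B C) ε₂
              + res E (leAC E A B C) p.2 = 0),
        f₁ ((p.1.1, y), ε₁) * f₂ ((y, p.1.2), ε₂)) *
      (Nat.card ↥(A ⊓ B ⊓ C) : ℂ) / (Nat.card ↥(A ⊓ C) : ℂ)

/-- The defining conditions for membership in `𝓕_{AB}`: supported on `X²_{AB}` and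
invariant under the diagonal `E`-action. -/
def MemF (A B : Submodule (ZMod 2) E) (f : (X × X) × Dl E (A ⊓ B) → ℂ) : Prop :=
  (∀ p : (X × X) × Dl E (A ⊓ B), p.1 ∉ X2 E X A B → f p = 0) ∧
  (∀ (e : E) (x y : X) (ε : Dl E (A ⊓ B)), f ((e +ᵥ x, e +ᵥ y), ε) = f ((x, y), ε))

/-- `𝓕_{AB}` as a subspace of the space of all functions. -/
def FAB (A B : Submodule (ZMod 2) E) : Submodule ℂ ((X × X) × Dl E (A ⊓ B) → ℂ) where
  carrier := {f | MemF E X A B f}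
  add_mem' := by
    intro a b ha hb
    exact ⟨fun p hp => by simp [ha.1 p hp, hb.1 p hp],
      fun e x y ε => by simp [Pi.add_apply, ha.2 e x y ε, hb.2 e x y ε]⟩
  zero_mem' := ⟨fun p hp => rfl, fun e x y ε => rfl⟩
  smul_mem' := by
    intro c a ha
    exact ⟨fun p hp => by simp [Pi.smul_apply, ha.1 p hp],
      fun e x y ε => by simp [Pi.smul_apply, ha.2 e x y ε]⟩

/-- `[Ξ]^ε`. -/
def br (A B : Submodule (ZMod 2) E) (Ξ : Set (X × X)) (ε : Dl E (A ⊓ B)) :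
    (X × X) × Dl E (A ⊓ B) → ℂ :=
  fun p => if p.1 ∈ Ξ ∧ p.2 = ε then 1 else 0

/-- The ambient space of `𝓕 = ⊕_{A,B} 𝓕_{AB}` (all summands at once). -/
abbrev FF : Type := ∀ A B : Submodule (ZMod 2) E, (X × X) × Dl E (A ⊓ B) → ℂ

/-- The embedding of the `(A,B)` summand into `𝓕`. -/
def emb (A B : Submodule (ZMod 2) E) (f : (X × X) × Dl E (A ⊓ B) → ℂ) : FF E X :=
  fun A' B' p =>
    if h : A = A' ∧ B = B' then f (p.1, cast (by rw [h.1, h.2]) p.2) else 0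

/-- `𝓕` as a subspace of `FF`: componentwise supported on `X²_{AB}` and `E`-invariant. -/
def FFsub : Submodule ℂ (FF E X) where
  carrier := {g | ∀ A B, MemF E X A B (g A B)}
  add_mem' := by
    intro a b ha hb A B
    exact ⟨fun p hp => by simp [(ha A B).1 p hp, (hb A B).1 p hp],
      fun e x y ε => by simp [(ha A B).2 e x y ε, (hb A B).2 e x y ε]⟩
  zero_mem' := fun A B => ⟨fun p hp => rfl, fun e x y ε => rfl⟩
  smul_mem' := by
    intro c a ha A B
    exact ⟨fun p hp => by simp [(ha A B).1 p hp],
      fun e x y ε => by simp [(ha A B).2 e x y ε]⟩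

/-- The product on `𝓕` (zero between summands `𝓕_{AB}`, `𝓕_{B'C}` with `B ≠ B'`). -/
def mulFF (g h : FF E X) : FF E X :=
  fun A C => ∑ᶠ B : Submodule (ZMod 2) E, conv E X A B C (g A B) (h B C)

/-- The diagonal `Δ_A ⊆ X²_{AA}`. -/
def diagSet (A : Submodule (ZMod 2) E) : Set (X × X) :=
  {q : X × X | q.1 ∈ XA E X A ∧ q.2 = q.1}

/-- The element `∑_A [Δ_A]^0` of `𝓕`. -/
def unitFF : FF E X :=
  ∑ᶠ A : Submodule (ZMod 2) E, emb E X A A (br E X A A (diagSet E X A) 0)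

/-- The map `f ↦ f^#` on `𝓕`. -/
def shFF (g : FF E X) : FF E X :=
  fun A B p => g B A ((p.1.2, p.1.1), res E (leBA E B A) p.2)

/-- `𝒪 • 𝒪'`. -/
def bullet (O O' : Set (X × X)) : Set (X × X) :=
  {q : X × X | ∃ y : X, (q.1, y) ∈ O ∧ (y, q.2) ∈ O'}

/-- `∑_{ε ∈ α̃} [𝓜]^ε ∈ 𝓕_{AC}`, where `α̃` is the fibre of
`(A∩C)* → (A∩B∩C)*` over `α`. -/
def bSum (A B C : Submodule (ZMod 2) E) (M : Set (X × X)) (α : Dl E (A ⊓ B ⊓ C)) :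
    (X × X) × Dl E (A ⊓ C) → ℂ :=
  ∑ᶠ (ε : Dl E (A ⊓ C)) (_ : res E (leAC E A B C) ε = α), br E X A C M ε

/-- The set `𝓑_{oBC} ⊆ 𝓕` (embedded in `FF`). -/
def BoBC (A B C : Submodule (ZMod 2) E) (o : Set X) : Set (FF E X) :=
  {g | ∃ (M : Set (X × X)) (α : Dl E (A ⊓ B ⊓ C)),
      IsOrbEB E X A B C M ∧ p1 X M = o ∧ g = emb E X A C (bSum E X A B C M α)}

/-- The set `𝓑_{oB} = ⊔_C 𝓑_{oBC}`. -/
def BoB (A B : Submodule (ZMod 2) E) (o : Set X) : Set (FF E X) :=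
  ⋃ C : Submodule (ZMod 2) E, BoBC E X A B C o

/-- `[[oB]]`, the `ℂ`-span of `𝓑_{oB}`. -/
def ooB (A B : Submodule (ZMod 2) E) (o : Set X) : Submodule ℂ (FF E X) :=
  Submodule.span ℂ (BoB E X A B o)


/-! ### Auxiliary lemmas for statement17 -/

section Aux

lemma addself (v : E) : v + v = 0 := by
  have h := add_smul (1 : ZMod 2) 1 v
  rw [one_smul] at h
  have h2 : (1 + 1 : ZMod 2) = 0 := by decide
  rw [← h, h2, zero_smul]

lemma add_add_self (a b : E) : a + b + b = a := by
  rw [add_assoc, addself, add_zero]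

lemma mem_orb_self (x : X) : x ∈ orb E X x := ⟨0, (zero_vadd E x).symm⟩

lemma orb_vadd (e : E) (x : X) : orb E X (e +ᵥ x) = orb E X x := by
  ext z
  constructor
  · rintro ⟨f, rfl⟩
    exact ⟨f + e, by rw [vadd_vadd]⟩
  · rintro ⟨f, rfl⟩
    exact ⟨f + e, by rw [vadd_vadd, add_add_self]⟩

lemma orb_eq_of_mem {x y : X} (h : y ∈ orb E X x) : orb E X y = orb E X x := by
  obtain ⟨e, rfl⟩ := h
  exact orb_vadd E X e x

lemma stab_vadd {A : Submodule (ZMod 2) E} {x : X} (hx : x ∈ XA E X A) {a : E}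
    (ha : a ∈ A) : a +ᵥ x = x := by
  have hm : a ∈ stabSet E X x := by
    rw [show stabSet E X x = (A : Set E) from hx]
    exact ha
  exact hm

lemma p1_orbEB (B : Submodule (ZMod 2) E) (x y : X) :
    p1 X (orbEB E X B x y) = orb E X x := by
  ext z
  constructor
  · rintro ⟨⟨z1, z2⟩, ⟨e, b, hb, hq⟩, rfl⟩
    exact ⟨e + b, congrArg Prod.fst hq⟩
  · rintro ⟨f, rfl⟩
    exact ⟨(f +ᵥ x, f +ᵥ y), ⟨f, 0, B.zero_mem, by rw [add_zero]⟩, rfl⟩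

lemma orbEB_subset_of_mem {B : Submodule (ZMod 2) E} {x y x' y' : X}
    (h : (x', y') ∈ orbEB E X B x y) : orbEB E X B x' y' ⊆ orbEB E X B x y := by
  obtain ⟨e0, b0, hb0, hq⟩ := h
  have hx' : x' = (e0 + b0) +ᵥ x := congrArg Prod.fst hq
  have hy' : y' = e0 +ᵥ y := congrArg Prod.snd hq
  rintro ⟨z1, z2⟩ ⟨e, b, hb, hq2⟩
  refine ⟨e + e0, b + b0, B.add_mem hb hb0, ?_⟩
  rw [hq2, hx', hy']
  congr 1
  · rw [vadd_vadd]
    congr 1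
    abel
  · rw [vadd_vadd]

lemma mem_orbEB_symm {B : Submodule (ZMod 2) E} {x y x' y' : X}
    (h : (x', y') ∈ orbEB E X B x y) : (x, y) ∈ orbEB E X B x' y' := by
  obtain ⟨e0, b0, hb0, hq⟩ := h
  have hx' : x' = (e0 + b0) +ᵥ x := congrArg Prod.fst hq
  have hy' : y' = e0 +ᵥ y := congrArg Prod.snd hq
  refine ⟨e0, b0, hb0, ?_⟩
  rw [hx', hy']
  congr 1
  · rw [vadd_vadd, addself, zero_vadd]
  · rw [vadd_vadd, addself, zero_vadd]

lemma orbEB_eq_of_mem {B : Submodule (ZMod 2) E} {x y x' y' : X}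
    (h : (x', y') ∈ orbEB E X B x y) : orbEB E X B x' y' = orbEB E X B x y :=
  Set.Subset.antisymm (orbEB_subset_of_mem E X h)
    (orbEB_subset_of_mem E X (mem_orbEB_symm E X h))

lemma mem_orbEB {A B : Submodule (ZMod 2) E} (hs : A ⊔ B = ⊤) {x y x' y' : X}
    (hx : x ∈ XA E X A) (hx' : x' ∈ orb E X x) (hy' : y' ∈ orb E X y) :
    (x', y') ∈ orbEB E X B x y := by
  obtain ⟨f, rfl⟩ := hx'
  obtain ⟨e, rfl⟩ := hy'
  have hfe : f + e ∈ A ⊔ B := by rw [hs]; exact Submodule.mem_top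
  obtain ⟨a, ha, b, hb, hab⟩ := Submodule.mem_sup.mp hfe
  refine ⟨e, b, hb, ?_⟩
  congr 1
  have ha2 : a = f + e + b := by
    have h1 : a = a + b + b := (add_add_self E a b).symm
    rw [hab] at h1
    exact h1
  have hax : a +ᵥ x = x := stab_vadd E X hx ha
  calc f +ᵥ x = f +ᵥ (a +ᵥ x) := by rw [hax]
    _ = (f + a) +ᵥ x := vadd_vadd f a x
    _ = (e + b) +ᵥ x := by
        congr 1
        rw [ha2, ← add_assoc, ← add_assoc, addself, zero_add]

lemma orbEB_congr {A B : Submodule (ZMod 2) E} (hs : A ⊔ B = ⊤) {x y x' y' : X}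
    (hx : x ∈ XA E X A) (hox : orb E X x' = orb E X x) (hoy : orb E X y' = orb E X y) :
    orbEB E X B x' y' = orbEB E X B x y := by
  refine orbEB_eq_of_mem E X (mem_orbEB E X hs hx ?_ ?_)
  · rw [← hox]; exact mem_orb_self E X x'
  · rw [← hoy]; exact mem_orb_self E X y'

lemma dl_subsingleton {A B : Submodule (ZMod 2) E} (C : Submodule (ZMod 2) E)
    (hd : A ⊓ B = ⊥) : Subsingleton (Dl E (A ⊓ B ⊓ C)) := by
  have hbot : A ⊓ B ⊓ C = ⊥ := by rw [hd]; exact bot_inf_eq C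
  haveI : Subsingleton ↥(A ⊓ B ⊓ C) := by rw [hbot]; infer_instance
  constructor
  intro f g
  ext z
  rw [Subsingleton.elim z 0, map_zero, map_zero]

lemma bSum_eq {A B : Submodule (ZMod 2) E} (C : Submodule (ZMod 2) E)
    (hd : A ⊓ B = ⊥) (M : Set (X × X)) (α : Dl E (A ⊓ B ⊓ C)) :
    bSum E X A B C M α = fun p => if p.1 ∈ M then (1 : ℂ) else 0 := by
  haveI := dl_subsingleton E C hd
  haveI : Finite (Dl E (A ⊓ C)) :=
    Finite.of_injective _ (DFunLike.coe_injective (F := Dl E (A ⊓ C)))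
  letI : Fintype (Dl E (A ⊓ C)) := Fintype.ofFinite _
  unfold bSum
  have h1 : ∀ ε : Dl E (A ⊓ C),
      (∑ᶠ (_ : res E (leAC E A B C) ε = α), br E X A C M ε) = br E X A C M ε := by
    intro ε
    have hε : res E (leAC E A B C) ε = α := Subsingleton.elim _ _
    rw [finsum_eq_if, if_pos hε]
  rw [finsum_congr h1, finsum_eq_sum_of_fintype]
  funext p
  rw [Finset.sum_apply]
  unfold br
  by_cases hp : p.1 ∈ M
  · simp only [hp, true_and, if_pos]
    rw [Finset.sum_ite_eq Finset.univ p.2 (fun _ => (1 : ℂ))]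
    simp
  · simp [hp]

/-- Linear independence from separating evaluation functionals. -/
lemma li_helper {ι V : Type*} [AddCommGroup V] [Module ℂ V] (f : ι → V)
    (φ : ι → V →ₗ[ℂ] ℂ) (h1 : ∀ i, φ i (f i) ≠ 0)
    (h2 : ∀ i j, i ≠ j → φ i (f j) = 0) : LinearIndependent ℂ f := by
  rw [linearIndependent_iff']
  intro s g hg i hi
  have hφ := congrArg (φ i) hg
  rw [map_sum, map_zero] at hφ
  have hsum : ∑ j ∈ s, g j * φ i (f j) = 0 := by
    rw [← hφ]
    exact Finset.sum_congr rfl fun j _ => (map_smul (φ i) (g j) (f j)).symm ▸ rfl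
  rw [Finset.sum_eq_single_of_mem i hi
    (fun j _ hj => by rw [h2 i j (Ne.symm hj), mul_zero])] at hsum
  exact (mul_eq_zero.mp hsum).resolve_right (h1 i)

end Aux

/-- if `A ⊕ B = E` then `dim [[oB]] = ∑_C |X̄_C|`, the total number of
`E`-orbits in `X`. -/
theorem statement17 (A B : Submodule (ZMod 2) E)
    (hd : A ⊓ B = ⊥) (hs : A ⊔ B = ⊤)
    (o : Set X) (ho : ∃ x ∈ XA E X A, o = orb E X x) :
    Module.finrank ℂ ↥(ooB E X A B o) =
      ∑ᶠ C : Submodule (ZMod 2) E, Nat.card ↥(barX E X C) := by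
  obtain ⟨x₀, hx₀, ho'⟩ := ho
  -- choose representatives of orbits
  have hrepE : ∀ (C : Submodule (ZMod 2) E) (s : barX E X C),
      ∃ y, y ∈ XA E X C ∧ (s : Set X) = orb E X y := by
    intro C s
    obtain ⟨y, hy, hs⟩ := s.2
    exact ⟨y, hy, hs⟩
  choose rep hrep1 hrep2 using hrepE
  -- the candidate basis family
  set v : (Σ C : Submodule (ZMod 2) E, barX E X C) → FF E X := fun i =>
    emb E X A i.1 (fun p => if p.1 ∈ orbEB E X B x₀ (rep i.1 i.2) then (1 : ℂ) else 0)
    with hv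
  -- range of v is BoB
  have hrange : Set.range v = BoB E X A B o := by
    ext g
    constructor
    · rintro ⟨⟨C, s⟩, rfl⟩
      refine Set.mem_iUnion.mpr ⟨C, orbEB E X B x₀ (rep C s), 0,
        ⟨x₀, rep C s, hx₀, hrep1 C s, rfl⟩, ?_, ?_⟩
      · rw [p1_orbEB, ho']
      · rw [bSum_eq E X C hd]
    · intro hg
      obtain ⟨C, hgC⟩ := Set.mem_iUnion.mp hg
      obtain ⟨M, α, ⟨x, y, hxA, hyC, rfl⟩, hp1, rfl⟩ := hgC
      refine ⟨⟨C, ⟨orb E X y, ⟨y, hyC, rfl⟩⟩⟩, ?_⟩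
      have hkey : orbEB E X B x₀ (rep C ⟨orb E X y, ⟨y, hyC, rfl⟩⟩) = orbEB E X B x y := by
        refine orbEB_congr E X hs hxA ?_ ?_
        · rw [← ho', ← hp1]; exact p1_orbEB E X B x y
        · exact ((hrep2 C ⟨orb E X y, ⟨y, hyC, rfl⟩⟩).symm : _)
      rw [hv]
      simp only
      rw [hkey, bSum_eq E X C hd]
  -- evaluation functionals
  set φ : (Σ C : Submodule (ZMod 2) E, barX E X C) → (FF E X →ₗ[ℂ] ℂ) := fun i =>
    { toFun := fun g => g A i.1 ((x₀, rep i.1 i.2), 0)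
      map_add' := fun _ _ => rfl
      map_smul' := fun _ _ => rfl } with hφ
  have h1 : ∀ i, φ i (v i) ≠ 0 := by
    rintro ⟨C, s⟩
    have hmem : ((x₀ : X), rep C s) ∈ orbEB E X B x₀ (rep C s) :=
      ⟨0, 0, B.zero_mem, by rw [add_zero, zero_vadd, zero_vadd]⟩
    simp [hφ, hv, emb, hmem]
  have h2 : ∀ i j, i ≠ j → φ i (v j) = 0 := by
    rintro ⟨C, s⟩ ⟨C', s'⟩ hne
    by_cases hC : C' = C
    · subst hC
      have hss : s ≠ s' := fun h => hne (by rw [h])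
      have hnm : ((x₀ : X), rep C' s) ∉ orbEB E X B x₀ (rep C' s') := by
        rintro ⟨e, b, hb, hq⟩
        have hq2 : rep C' s = e +ᵥ rep C' s' := congrArg Prod.snd hq
        have hset : (s : Set X) = (s' : Set X) := by
          rw [hrep2 C' s, hrep2 C' s', hq2, orb_vadd]
        exact hss (Subtype.ext hset)
      simp [hφ, hv, emb, hnm]
    · simp [hφ, hv, emb, hC]
  have hli : LinearIndependent ℂ v := li_helper v φ h1 h2
  have hspan : ooB E X A B o = Submodule.span ℂ (Set.range v) := by
    unfold ooB
    rw [hrange]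
  rw [hspan]
  haveI : Finite (Submodule (ZMod 2) E) :=
    Finite.of_injective _ (SetLike.coe_injective (A := Submodule (ZMod 2) E))
  letI : Fintype (Submodule (ZMod 2) E) := Fintype.ofFinite _
  letI : ∀ C : Submodule (ZMod 2) E, Fintype (barX E X C) := fun C => Fintype.ofFinite _
  rw [finrank_span_eq_card hli]
  rw [Fintype.card_sigma]
  rw [finsum_eq_sum_of_fintype]
  exact Finset.sum_congr rfl fun C _ => (Nat.card_eq_fintype_card).symm

end Lusztig
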